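/- arXiv:1401.5365 — 9 statements merged into one kernel-verified Lean document; each statement's English description precedes it below -/
import Mathlib

section
/- Let D, U be row-stochastic (κ+1)×(κ+1) matrices with DU = UD and (DU)_{a,b} > 0 for all a,b, let ρ be a probability vector with ρ DU = ρ, and define T_{(a,b),c} = D_{a,c} U_{c,b} / (DU)_{a,b}. Then for any n ≥ 0 and any b_0,...,b_n, c_0,...,c_{n-1} in E_κ, one has ∑_{a_0,...,a_{n+1}} ρ_{a_0} (∏_{i=0}^{n} D_{a_i,b_i} U_{b_i,a_{i+1}}) (∏_{i=0}^{n-1} T_{(b_i,b_{i+1}),c_i}) = ρ_{b_0} ∏_{i=0}^{n-1} D_{b_i,c_i} U_{c_i,b_{i+1}}. -/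
lemma sumG_aux (κ : ℕ) (D U : Matrix (Fin (κ+1)) (Fin (κ+1)) ℝ)
    (hU1 : ∀ a, ∑ c, U a c = 1) :
    ∀ (n : ℕ) (v : Fin (κ+1) → ℝ) (b : Fin (n+1) → Fin (κ+1)),
    ∑ a : Fin (n+2) → Fin (κ+1),
      v (a 0) * ∏ i : Fin (n+1), D (a i.castSucc) (b i) * U (b i) (a i.succ)
    = (∑ x, v x * D x (b 0)) * ∏ i : Fin n, (U * D) (b i.castSucc) (b i.succ) := by
  intro n
  induction n with
  | zero =>
    intro v b
    rw [← (Fin.consEquiv (fun _ : Fin 2 => Fin (κ+1))).sum_comp]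
    simp only [Fin.consEquiv_apply, Fintype.sum_prod_type, Fin.cons_zero, Fin.cons_succ,
      Fin.prod_univ_one, Fin.castSucc_zero, Fin.cons_zero, Fin.prod_univ_zero, mul_one]
    rw [Finset.sum_congr rfl (fun x _ => ?_)]
    rw [← (Equiv.funUnique (Fin 1) (Fin (κ+1))).symm.sum_comp]
    simp [← Finset.mul_sum, hU1]
  | succ n ih =>
    intro v b
    rw [← (Fin.consEquiv (fun _ : Fin (n+3) => Fin (κ+1))).sum_comp]
    simp only [Fin.consEquiv_apply, Fintype.sum_prod_type, Fin.cons_zero, Fin.cons_succ]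
    have hterm : ∀ (x : Fin (κ+1)) (a' : Fin (n+2) → Fin (κ+1)),
        v x * ∏ i : Fin (n+2),
            D ((Fin.cons x a' : Fin (n+3) → Fin (κ+1)) i.castSucc) (b i) * U (b i) (a' i)
        = (v x * D x (b 0)) * (U (b 0) (a' 0) *
            ∏ i : Fin (n+1), D (a' i.castSucc) (b i.succ) * U (b i.succ) (a' i.succ)) := by
      intro x a'
      rw [Fin.prod_univ_succ]
      simp only [Fin.castSucc_zero, Fin.cons_zero, ← Fin.succ_castSucc, Fin.cons_succ]
      ring
    rw [Finset.sum_congr rfl (fun x _ => Finset.sum_congr rfl (fun a' _ => hterm x a'))]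
    rw [← Finset.sum_mul_sum]
    rw [ih (fun y => U (b 0) y) (fun i => b i.succ)]
    rw [Fin.prod_univ_succ]
    simp only [Matrix.mul_apply, Fin.castSucc_zero, Fin.succ_castSucc, mul_assoc]

lemma statUnique_aux (κ : ℕ) (M : Matrix (Fin (κ+1)) (Fin (κ+1)) ℝ)
    (hpos : ∀ a b, 0 < M a b) (hrow : ∀ a, ∑ b, M a b = 1)
    (ρ σ : Fin (κ+1) → ℝ) (hρ1 : ∑ a, ρ a = 1) (hσ1 : ∑ a, σ a = 1)
    (hρ : ∀ b, ∑ a, ρ a * M a b = ρ b) (hσ : ∀ b, ∑ a, σ a * M a b = σ b) :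
    ∀ b, ρ b = σ b := by
  set δ : Fin (κ+1) → ℝ := fun a => ρ a - σ a with hδ
  have hδfix : ∀ b, ∑ a, δ a * M a b = δ b := by
    intro b
    simp only [hδ, sub_mul, Finset.sum_sub_distrib, hρ, hσ]
  have hδsum : ∑ a, δ a = 0 := by
    simp [hδ, Finset.sum_sub_distrib, hρ1, hσ1]
  have key : ∀ b, |δ b| ≤ ∑ a, |δ a| * M a b := by
    intro b
    rw [← hδfix b]
    calc |∑ a, δ a * M a b| ≤ ∑ a, |δ a * M a b| := Finset.abs_sum_le_sum_abs _ _
      _ = ∑ a, |δ a| * M a b := by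
          refine Finset.sum_congr rfl fun a _ => ?_
          rw [abs_mul, abs_of_pos (hpos a b)]
  have total : ∑ b, ∑ a, |δ a| * M a b = ∑ b, |δ b| := by
    rw [Finset.sum_comm]
    simp [← Finset.mul_sum, hrow]
  have eqb : ∀ b, ∑ a, |δ a| * M a b = |δ b| := by
    have h0 : ∑ b, ((∑ a, |δ a| * M a b) - |δ b|) = 0 := by
      rw [Finset.sum_sub_distrib, total, sub_self]
    intro b
    have := (Finset.sum_eq_zero_iff_of_nonneg
      (fun b _ => sub_nonneg.2 (key b))).mp h0 b (Finset.mem_univ b)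
    linarith
  have hzero : ∀ a, δ a = 0 := by
    rcases le_or_gt 0 (δ 0) with h0 | h0
    · have habs : |δ 0| = δ 0 := abs_of_nonneg h0
      have h1 : ∑ a, (|δ a| - δ a) * M a 0 = 0 := by
        simp only [sub_mul, Finset.sum_sub_distrib, hδfix, eqb, habs, sub_self]
      have h2 : ∀ a, 0 ≤ δ a := by
        intro a
        have := (Finset.sum_eq_zero_iff_of_nonneg
          (fun a _ => mul_nonneg (by simp [sub_nonneg, le_abs_self]) (hpos a 0).le)).mp h1
          a (Finset.mem_univ a)
        have hM := hpos a 0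
        have : |δ a| - δ a = 0 := by
          rcases mul_eq_zero.mp this with h | h
          · exact h
          · exact absurd h hM.ne'
        nlinarith [abs_nonneg (δ a), le_abs_self (δ a)]
      intro a
      exact (Finset.sum_eq_zero_iff_of_nonneg (fun a _ => h2 a)).mp hδsum a (Finset.mem_univ a)
    · have habs : |δ 0| = -δ 0 := abs_of_neg h0
      have h1 : ∑ a, (|δ a| + δ a) * M a 0 = 0 := by
        simp only [add_mul, Finset.sum_add_distrib, hδfix, eqb, habs]
        ring
      have h2 : ∀ a, δ a ≤ 0 := by
        intro a
        have := (Finset.sum_eq_zero_iff_of_nonneg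
          (fun a _ => mul_nonneg (by nlinarith [abs_nonneg (δ a), neg_abs_le (δ a)]) (hpos a 0).le)).mp h1
          a (Finset.mem_univ a)
        have hM := hpos a 0
        have : |δ a| + δ a = 0 := by
          rcases mul_eq_zero.mp this with h | h
          · exact h
          · exact absurd h hM.ne'
        nlinarith [abs_nonneg (δ a), neg_abs_le (δ a)]
      have h3 : ∀ a, 0 ≤ -δ a := fun a => by linarith [h2 a]
      have h4 : ∑ a, -δ a = 0 := by simp [hδsum]
      intro a
      have := (Finset.sum_eq_zero_iff_of_nonneg (fun a _ => h3 a)).mp h4 a (Finset.mem_univ a)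
      linarith
  intro b
  have := hzero b
  simp only [hδ] at this
  linarith

theorem stmt_1 (κ : ℕ) (D U : Matrix (Fin (κ+1)) (Fin (κ+1)) ℝ)
    (hD0 : ∀ a c, 0 ≤ D a c) (hD1 : ∀ a, ∑ c, D a c = 1)
    (hU0 : ∀ a c, 0 ≤ U a c) (hU1 : ∀ a, ∑ c, U a c = 1)
    (hcomm : D * U = U * D)
    (hpos : ∀ a b, 0 < (D * U) a b)
    (ρ : Fin (κ+1) → ℝ) (hρ0 : ∀ a, 0 ≤ ρ a) (hρ1 : ∑ a, ρ a = 1)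
    (hstat : ∀ b, ∑ a, ρ a * (D * U) a b = ρ b)
    (T : Fin (κ+1) → Fin (κ+1) → Fin (κ+1) → ℝ)
    (hT : ∀ a b c, T a b c = D a c * U c b / (D * U) a b)
    (n : ℕ) (b : Fin (n+1) → Fin (κ+1)) (c : Fin n → Fin (κ+1)) :
    ∑ a : Fin (n+2) → Fin (κ+1),
      ρ (a 0) * (∏ i : Fin (n+1), D (a i.castSucc) (b i) * U (b i) (a i.succ))
        * ∏ i : Fin n, T (b i.castSucc) (b i.succ) (c i)
    = ρ (b 0) * ∏ i : Fin n, D (b i.castSucc) (c i) * U (c i) (b i.succ) := by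
  have hrowDU : ∀ a, ∑ y, (D * U) a y = 1 := by
    intro a
    simp only [Matrix.mul_apply]
    rw [Finset.sum_comm]
    simp [← Finset.mul_sum, hU1, hD1]
  have hassoc : D * (D * U) = (D * U) * D := by
    conv_lhs => rw [hcomm]
    rw [← mul_assoc]
  set σ : Fin (κ+1) → ℝ := fun y => ∑ x, ρ x * D x y with hσdef
  have hσ1 : ∑ y, σ y = 1 := by
    rw [Finset.sum_comm]
    simp [hσdef, ← Finset.mul_sum, hD1, hρ1]
  have hσstat : ∀ y, ∑ a, σ a * (D * U) a y = σ y := by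
    intro y
    have e1 : ∑ a, σ a * (D * U) a y = ∑ x, ρ x * (D * (D * U)) x y := by
      simp only [hσdef, Matrix.mul_apply (M := D) (N := D * U), Finset.sum_mul,
        Finset.mul_sum, mul_assoc]
      rw [Finset.sum_comm]
    have e2 : ∑ x, ρ x * ((D * U) * D) x y = ∑ z, (∑ x, ρ x * (D * U) x z) * D z y := by
      simp only [Matrix.mul_apply (M := D * U) (N := D), Finset.sum_mul,
        Finset.mul_sum, mul_assoc]
      rw [Finset.sum_comm]
    rw [e1, hassoc, e2]
    simp only [hstat]
    rfl
  have hρσ : ∀ y, ρ y = σ y :=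
    statUnique_aux κ (D * U) hpos hrowDU ρ σ hρ1 hσ1 hstat hσstat
  rw [← Finset.sum_mul, sumG_aux κ D U hU1 n ρ b]
  rw [show (∑ x, ρ x * D x (b 0)) = ρ (b 0) from (hρσ (b 0)).symm]
  rw [mul_assoc, ← Finset.prod_mul_distrib]
  congr 1
  refine Finset.prod_congr rfl fun i _ => ?_
  rw [hT, ← hcomm, mul_comm, div_mul_cancel₀ _ (hpos (b i.castSucc) (b i.succ)).ne']
end

section
/- Let T : E_κ × E_κ × E_κ → ℝ have all entries positive and satisfy, for all a,a',b,b',c,c': T(a',b',c')·T(a,b',c)·T(a,b,c')·T(a',b,c) = T(a,b,c)·T(a,b',c')·T(a',b',c)·T(a',b,c'). Then T(a,b,c) = T(0,0,0)·T(a,b,0)·T(a,0,c)·T(0,b,c) / (T(a,0,0)·T(0,b,0)·T(0,0,c)) for all a,b,c. -/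
theorem stmt_3 (κ : ℕ) (T : Fin (κ+1) → Fin (κ+1) → Fin (κ+1) → ℝ)
    (hpos : ∀ a b c, 0 < T a b c)
    (hcond : ∀ a a' b b' c c',
      T a' b' c' * T a b' c * T a b c' * T a' b c
        = T a b c * T a b' c' * T a' b' c * T a' b c') :
    ∀ a b c, T a b c =
      T 0 0 0 * T a b 0 * T a 0 c * T 0 b c / (T a 0 0 * T 0 b 0 * T 0 0 c) := by
  intro a b c
  have hden : T a 0 0 * T 0 b 0 * T 0 0 c ≠ 0 :=
    (mul_pos (mul_pos (hpos a 0 0) (hpos 0 b 0)) (hpos 0 0 c)).ne'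
  rw [eq_div_iff hden]
  linear_combination -hcond a 0 b 0 c 0
end

section
/- Let T be a positive-rate stochastic transition matrix on E_κ (T(a,b,c) > 0 and ∑_c T(a,b,c) = 1 for all a,b) satisfying T(a,b,c) = T(0,0,0)·T(a,b,0)·T(a,0,c)·T(0,b,c)/(T(a,0,0)·T(0,b,0)·T(0,0,c)) for all a,b,c. Let η be a probability vector with all entries positive, and define D_{a,c} = (∑_ℓ (η_ℓ/T(a,ℓ,0))·T(a,ℓ,c)) / (∑_{b'} η_{b'}/T(a,b',0)) and U_{c,b} = ((η_b/T(0,b,0))·T(0,b,c)) / (∑_{b'} (η_{b'}/T(0,b',0))·T(0,b',c)). Then D and U are row-stochastic and for all a,b,c: D_{a,c}·U_{c,b} / (DU)_{a,b} = T(a,b,c). -/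
/-!
The factorization hypothesis says that `T a b c / T a b 0` is `T 0 b c / T 0 b 0` times a factor
`r a c` independent of `b`. Hence, with weights `w a b = η b / T a b 0`, the mixture
`∑ ℓ, w a ℓ * T a ℓ c` is `r a c` times the normalizer of `U`'s column `c`, and the product
`D a c * U c b` collapses to `w a b * T a b c / ∑ ℓ, w a ℓ`. Summing over `c` gives
`(D * U) a b = w a b / ∑ ℓ, w a ℓ`, and dividing recovers `T a b c`.
-/

open Finset

section Normalization

variable {ι κ K : Type*} [Fintype ι] [Fintype κ] [Field K]

theorem sum_div_sum_eq_one (x : ι → K) (hx : ∑ i, x i ≠ 0) : ∑ i, x i / ∑ j, x j = 1 := by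
  rw [← sum_div, div_self hx]

theorem sum_mixture_div_sum_eq_one (w : ι → K) (T : ι → κ → K) (hT : ∀ ℓ, ∑ c, T ℓ c = 1)
    (hw : ∑ ℓ, w ℓ ≠ 0) : ∑ c, (∑ ℓ, w ℓ * T ℓ c) / ∑ ℓ, w ℓ = 1 := by
  rw [← sum_div, sum_comm]
  simp_rw [← mul_sum, hT, mul_one]
  exact div_self hw

theorem sum_div_mul_div_sum_eq_of_proportional (W V : ι → K) (r Z : K)
    (hW : ∀ ℓ, W ℓ = r * V ℓ) (hV : ∑ ℓ, V ℓ ≠ 0) (b : ι) :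
    (∑ ℓ, W ℓ) / Z * (V b / ∑ ℓ, V ℓ) = W b / Z := by
  simp_rw [hW, ← mul_sum]
  field_simp

end Normalization

theorem Matrix.mul_apply_eq_of_mul_eq {l m n K : Type*} [Fintype m] [CommSemiring K]
    {D : Matrix l m K} {U : Matrix m n K} {a : l} {b : n} {t : m → K} {p : K}
    (ht : ∑ c, t c = 1) (h : ∀ c, D a c * U c b = p * t c) : (D * U) a b = p := by
  rw [Matrix.mul_apply]
  simp_rw [h, ← mul_sum, ht, mul_one]

theorem Matrix.mul_div_mul_apply_eq_of_mul_eq {l m n K : Type*} [Fintype m] [Field K]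
    {D : Matrix l m K} {U : Matrix m n K} {a : l} {b : n} {t : m → K} {p : K}
    (ht : ∑ c, t c = 1) (h : ∀ c, D a c * U c b = p * t c) (hp : p ≠ 0) (c : m) :
    D a c * U c b / (D * U) a b = t c := by
  rw [Matrix.mul_apply_eq_of_mul_eq ht h, h, mul_div_cancel_left₀ _ hp]

theorem div_mul_eq_mul_div_mul_of_factorization {ι K : Type*} [Field K] {T : ι → ι → ι → K}
    {o : ι} (hne : ∀ a b c, T a b c ≠ 0)
    (hcond : ∀ a b c, T a b c =
      T o o o * T a b o * T a o c * T o b c / (T a o o * T o b o * T o o c))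
    (x : K) (a b c : ι) :
    x / T a b o * T a b c = T o o o * T a o c / (T a o o * T o o c) * (x / T o b o * T o b c) := by
  rw [hcond a b c]
  field_simp [hne a b o, hne o b o, hne a o o, hne o o c]

theorem stmt_4_general (κ : ℕ) (T : Fin (κ+1) → Fin (κ+1) → Fin (κ+1) → ℝ)
    (hpos : ∀ a b c, 0 < T a b c)
    (hstoch : ∀ a b, ∑ c, T a b c = 1)
    (hcond : ∀ a b c, T a b c =
      T 0 0 0 * T a b 0 * T a 0 c * T 0 b c / (T a 0 0 * T 0 b 0 * T 0 0 c))
    (η : Fin (κ+1) → ℝ) (hη : ∀ a, 0 < η a)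
    (D U : Matrix (Fin (κ+1)) (Fin (κ+1)) ℝ)
    (hD : ∀ a c, D a c = (∑ ℓ, (η ℓ / T a ℓ 0) * T a ℓ c) / (∑ b', η b' / T a b' 0))
    (hU : ∀ c b, U c b = ((η b / T 0 b 0) * T 0 b c) / (∑ b', (η b' / T 0 b' 0) * T 0 b' c)) :
    (∀ a c, 0 ≤ D a c) ∧ (∀ a, ∑ c, D a c = 1) ∧
    (∀ a c, 0 ≤ U a c) ∧ (∀ a, ∑ c, U a c = 1) ∧
    (∀ a b c, D a c * U c b / (D * U) a b = T a b c) := by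
  have hw : ∀ a b, 0 < η b / T a b 0 := fun a b => div_pos (hη b) (hpos a b 0)
  have hZ : ∀ a, 0 < ∑ b, η b / T a b 0 := fun a => sum_pos (fun b _ => hw a b) univ_nonempty
  have hS : ∀ c, 0 < ∑ b, η b / T 0 b 0 * T 0 b c :=
    fun c => sum_pos (fun b _ => mul_pos (hw 0 b) (hpos 0 b c)) univ_nonempty
  have hDU : ∀ a b c,
      D a c * U c b = η b / T a b 0 / (∑ b', η b' / T a b' 0) * T a b c := fun a b c => by
    rw [hD, hU, sum_div_mul_div_sum_eq_of_proportional _ _ _ _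
      (div_mul_eq_mul_div_mul_of_factorization (fun a b c => (hpos a b c).ne') hcond _ a · c)
      (hS c).ne']
    ring
  refine ⟨fun a c => ?_, fun a => ?_, fun c b => ?_, fun c => ?_, fun a b c => ?_⟩
  · rw [hD]
    exact div_nonneg (sum_nonneg fun ℓ _ => mul_nonneg (hw a ℓ).le (hpos a ℓ c).le) (hZ a).le
  · simp only [hD]
    exact sum_mixture_div_sum_eq_one _ _ (hstoch a) (hZ a).ne'
  · rw [hU]
    exact div_nonneg (mul_nonneg (hw 0 b).le (hpos 0 b c).le) (hS c).le
  · simp only [hU]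
    exact sum_div_sum_eq_one _ (hS c).ne'
  · exact Matrix.mul_div_mul_apply_eq_of_mul_eq (hstoch a b) (hDU a b)
      (div_pos (hw a b) (hZ a)).ne' c

theorem stmt_4 (κ : ℕ) (T : Fin (κ+1) → Fin (κ+1) → Fin (κ+1) → ℝ)
    (hpos : ∀ a b c, 0 < T a b c)
    (hstoch : ∀ a b, ∑ c, T a b c = 1)
    (hcond : ∀ a b c, T a b c =
      T 0 0 0 * T a b 0 * T a 0 c * T 0 b c / (T a 0 0 * T 0 b 0 * T 0 0 c))
    (η : Fin (κ+1) → ℝ) (hη : ∀ a, 0 < η a) (hη1 : ∑ a, η a = 1)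
    (D U : Matrix (Fin (κ+1)) (Fin (κ+1)) ℝ)
    (hD : ∀ a c, D a c = (∑ ℓ, (η ℓ / T a ℓ 0) * T a ℓ c) / (∑ b', η b' / T a b' 0))
    (hU : ∀ c b, U c b = ((η b / T 0 b 0) * T 0 b c) / (∑ b', (η b' / T 0 b' 0) * T 0 b' c)) :
    (∀ a c, 0 ≤ D a c) ∧ (∀ a, ∑ c, D a c = 1) ∧
    (∀ a c, 0 ≤ U a c) ∧ (∀ a, ∑ c, U a c = 1) ∧
    (∀ a b c, D a c * U c b / (D * U) a b = T a b c) :=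
  stmt_4_general κ T hpos hstoch hcond η hη D U hD hU
end

section
/- Let T be a positive-rate stochastic transition matrix on E_κ satisfying the condition T(a,b,c) = T(0,0,0)·T(a,b,0)·T(a,0,c)·T(0,b,c)/(T(a,0,0)·T(0,b,0)·T(0,0,c)), let η be a strictly positive probability vector, and define D^η, U^η as D^η_{a,c} = (∑_ℓ (η_ℓ/T(a,ℓ,0))·T(a,ℓ,c)) / (∑_{b'} η_{b'}/T(a,b',0)), U^η_{c,b} = ((η_b/T(0,b,0))·T(0,b,c)) / (∑_{b'} (η_{b'}/T(0,b',0))·T(0,b',c)). Then (D^η U^η)_{a,b} = (1/∑_d (η_d/T(a,d,0))) · η_b/T(a,b,0) for all a,b. -/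
/-!
The condition on `T` says that `T a ℓ c = α a c * T a ℓ 0 * (T 0 ℓ c / T 0 ℓ 0)` with
`α a c = T 0 0 0 * T a 0 c / (T a 0 0 * T 0 0 c)`. Hence the numerator of `D a c` is `α a c`
times the denominator of `U c ·`, so that `D a c * U c b` collapses to
`(η b / T a b 0) * T a b c / ∑ d, η d / T a d 0`; summing over `c` with `∑ c, T a b c = 1`
gives the claim.
-/

open Finset

namespace TransitionMatrix

variable {K ι : Type*} [Field K] [Fintype ι]

-- `D^η` and `U^η`, with the base state `o` in place of `0`.
noncomputable def down (T : ι → ι → ι → K) (η : ι → K) (o : ι) : Matrix ι ι K :=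
  fun a c => (∑ ℓ, η ℓ / T a ℓ o * T a ℓ c) / ∑ b', η b' / T a b' o

noncomputable def up (T : ι → ι → ι → K) (η : ι → K) (o : ι) : Matrix ι ι K :=
  fun c b => η b / T o b o * T o b c / ∑ b', η b' / T o b' o * T o b' c

variable {T : ι → ι → ι → K} {o : ι} (η : ι → K)

section Factorization

variable (hT : ∀ a b c, T a b c ≠ 0)
  (hcond : ∀ a b c, T a b c =
    T o o o * T a b o * T a o c * T o b c / (T a o o * T o b o * T o o c))
include hT hcond

theorem sum_div_mul_eq (a c : ι) :
    ∑ ℓ, η ℓ / T a ℓ o * T a ℓ c =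
      T o o o * T a o c / (T a o o * T o o c) * ∑ ℓ, η ℓ / T o ℓ o * T o ℓ c := by
  rw [mul_sum]
  refine sum_congr rfl fun ℓ _ => ?_
  rw [hcond a ℓ c]
  field_simp [hT]

theorem down_mul_up_entry (a b c : ι) (hV : ∑ ℓ, η ℓ / T o ℓ o * T o ℓ c ≠ 0) :
    down T η o a c * up T η o c b = 1 / (∑ d, η d / T a d o) * (η b / T a b o) * T a b c := by
  rw [down, up, sum_div_mul_eq η hT hcond, hcond a b c]
  generalize ∑ ℓ, η ℓ / T o ℓ o * T o ℓ c = V at hV ⊢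
  generalize ∑ d, η d / T a d o = S
  field_simp [hT]

theorem down_mul_up_apply (hstoch : ∀ a b, ∑ c, T a b c = 1)
    (hV : ∀ c, ∑ ℓ, η ℓ / T o ℓ o * T o ℓ c ≠ 0) (a b : ι) :
    (down T η o * up T η o) a b = 1 / (∑ d, η d / T a d o) * (η b / T a b o) := by
  rw [Matrix.mul_apply, sum_congr rfl fun c _ => down_mul_up_entry η hT hcond a b c (hV c),
    ← mul_sum, hstoch, mul_one]

end Factorization

end TransitionMatrix

open TransitionMatrix in
theorem stmt_6_general (κ : ℕ) (T : Fin (κ+1) → Fin (κ+1) → Fin (κ+1) → ℝ)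
    (hpos : ∀ a b c, 0 < T a b c)
    (hstoch : ∀ a b, ∑ c, T a b c = 1)
    (hcond : ∀ a b c, T a b c =
      T 0 0 0 * T a b 0 * T a 0 c * T 0 b c / (T a 0 0 * T 0 b 0 * T 0 0 c))
    (η : Fin (κ+1) → ℝ) (hη : ∀ a, 0 < η a)
    (D U : Matrix (Fin (κ+1)) (Fin (κ+1)) ℝ)
    (hD : ∀ a c, D a c = (∑ ℓ, (η ℓ / T a ℓ 0) * T a ℓ c) / (∑ b', η b' / T a b' 0))
    (hU : ∀ c b, U c b = ((η b / T 0 b 0) * T 0 b c) / (∑ b', (η b' / T 0 b' 0) * T 0 b' c)) :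
    ∀ a b, (D * U) a b = (1 / ∑ d, η d / T a d 0) * (η b / T a b 0) := by
  obtain rfl : D = down T η 0 := Matrix.ext hD
  obtain rfl : U = up T η 0 := Matrix.ext hU
  have hV (c) : ∑ ℓ, η ℓ / T 0 ℓ 0 * T 0 ℓ c ≠ 0 :=
    (sum_pos (fun ℓ _ => mul_pos (div_pos (hη ℓ) (hpos 0 ℓ 0)) (hpos 0 ℓ c))
      univ_nonempty).ne'
  exact down_mul_up_apply η (fun a b c => (hpos a b c).ne') hcond hstoch hV

theorem stmt_6 (κ : ℕ) (T : Fin (κ+1) → Fin (κ+1) → Fin (κ+1) → ℝ)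
    (hpos : ∀ a b c, 0 < T a b c)
    (hstoch : ∀ a b, ∑ c, T a b c = 1)
    (hcond : ∀ a b c, T a b c =
      T 0 0 0 * T a b 0 * T a 0 c * T 0 b c / (T a 0 0 * T 0 b 0 * T 0 0 c))
    (η : Fin (κ+1) → ℝ) (hη : ∀ a, 0 < η a) (hη1 : ∑ a, η a = 1)
    (D U : Matrix (Fin (κ+1)) (Fin (κ+1)) ℝ)
    (hD : ∀ a c, D a c = (∑ ℓ, (η ℓ / T a ℓ 0) * T a ℓ c) / (∑ b', η b' / T a b' 0))
    (hU : ∀ c b, U c b = ((η b / T 0 b 0) * T 0 b c) / (∑ b', (η b' / T 0 b' 0) * T 0 b' c)) :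
    ∀ a b, (D * U) a b = (1 / ∑ d, η d / T a d 0) * (η b / T a b 0) :=
  stmt_6_general κ T hpos hstoch hcond η hη D U hD hU
end

section
/- Let Q_0, ..., Q_κ be (κ+1)×(κ+1) real matrices, and let v and w be vectors in ℝ^{κ+1}. If v · P · w = 0 for every product P = Q_{y_1} Q_{y_2} ⋯ Q_{y_d} of at most κ+1 of the matrices Q_i (with repetitions allowed, including the empty product = identity), then v · P · w = 0 for every finite product P of the matrices Q_i of arbitrary length. -/
/-!
The vectors `P *ᵥ w` with `P` a product of at most `d` factors span a subspace `K_d`, and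
`K_{d+1}` is spanned by `w` and the images `Q i (K_d)`. Hence the chain `K_0 ≤ K_1 ≤ ⋯` is
constant from the first `d` with `K_d = K_{d+1}` on. Its dimensions increase strictly before that
and are bounded by the dimension `κ + 1` of the ambient space, so every `P *ᵥ w` already lies in
`K_{κ+1}`, on which `v ⬝ᵥ ·` vanishes by hypothesis.
-/

open Matrix Module

theorem Submodule.eq_of_monotone_of_stabilises {K V : Type*} [DivisionRing K] [AddCommGroup V]
    [Module K V] [FiniteDimensional K V] {f : ℕ → Submodule K V} (hmono : Monotone f)
    (hstab : ∀ m, f m = f (m + 1) → f (m + 1) = f (m + 2)) {n : ℕ} (hn : finrank K V ≤ n) :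
    f n = f (finrank K V) := by
  have hrank : finrank K (f n) = finrank K (f (finrank K V)) :=
    Nat.stabilises_of_monotone (f := fun m => finrank K (f m))
      (fun _ _ hab => Submodule.finrank_mono (hmono hab)) (fun m => Submodule.finrank_le _)
      (fun m h => congrArg (fun s : Submodule K V => finrank K s) <|
        hstab m <| Submodule.eq_of_le_of_finrank_eq (hmono m.le_succ) h) hn
  exact (Submodule.eq_of_le_of_finrank_eq (hmono hn) hrank.symm).symm

namespace Matrix

variable {ι n K : Type*} [Fintype n] [DecidableEq n] [Field K] (Q : ι → Matrix n n K) (w : n → K)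

def krylov (d : ℕ) : Submodule K (n → K) :=
  Submodule.span K ((fun l : List ι => (l.map Q).prod *ᵥ w) '' {l | l.length ≤ d})

variable {Q w}

theorem prod_mulVec_mem_krylov {l : List ι} {d : ℕ} (hl : l.length ≤ d) :
    (l.map Q).prod *ᵥ w ∈ krylov Q w d :=
  Submodule.subset_span ⟨l, hl, rfl⟩

theorem krylov_mono : Monotone (krylov Q w) := fun _ _ hde =>
  Submodule.span_mono <| Set.image_mono fun _ hl => le_trans hl hde

theorem mulVec_mem_krylov_succ {d : ℕ} {x : n → K} (hx : x ∈ krylov Q w d) (i : ι) :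
    Q i *ᵥ x ∈ krylov Q w (d + 1) := by
  have hmap : (krylov Q w d).map (mulVecLin (Q i)) ≤ krylov Q w (d + 1) := by
    rw [krylov, Submodule.map_span, Submodule.span_le]
    rintro _ ⟨_, ⟨l, hl, rfl⟩, rfl⟩
    simpa [mulVec_mulVec] using prod_mulVec_mem_krylov (Q := Q) (w := w) (l := i :: l)
      (Nat.succ_le_succ hl)
  exact hmap ⟨x, hx, rfl⟩

theorem krylov_succ_succ_eq {d : ℕ} (hd : krylov Q w d = krylov Q w (d + 1)) :
    krylov Q w (d + 1) = krylov Q w (d + 2) := by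
  refine le_antisymm (krylov_mono (Nat.le_succ _)) ?_
  rw [krylov, Submodule.span_le]
  rintro _ ⟨l, hl, rfl⟩
  match l with
  | [] => exact prod_mulVec_mem_krylov (Nat.zero_le _)
  | i :: l =>
    have hl' : l.length ≤ d + 1 := Nat.le_of_succ_le_succ hl
    have hx : (l.map Q).prod *ᵥ w ∈ krylov Q w d := hd ▸ prod_mulVec_mem_krylov hl'
    simpa [mulVec_mulVec] using mulVec_mem_krylov_succ hx i

theorem krylov_le_krylov_card (d : ℕ) : krylov Q w d ≤ krylov Q w (Fintype.card n) := by
  rcases le_total d (Fintype.card n) with hd | hd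
  · exact krylov_mono hd
  · rw [← finrank_fintype_fun_eq_card K] at hd ⊢
    exact (Submodule.eq_of_monotone_of_stabilises krylov_mono (fun _ => krylov_succ_succ_eq) hd).le

theorem dotProduct_eq_zero_of_mem_krylov {v x : n → K} {d : ℕ}
    (h : ∀ l : List ι, l.length ≤ d → v ⬝ᵥ (l.map Q).prod *ᵥ w = 0) (hx : x ∈ krylov Q w d) :
    v ⬝ᵥ x = 0 := by
  have hker : krylov Q w d ≤ LinearMap.ker (dotProductBilin K K v) := by
    rw [krylov, Submodule.span_le]
    rintro _ ⟨l, hl, rfl⟩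
    exact h l hl
  exact hker hx

theorem dotProduct_prod_mulVec_eq_zero {v : n → K}
    (h : ∀ l : List ι, l.length ≤ Fintype.card n → v ⬝ᵥ (l.map Q).prod *ᵥ w = 0) (l : List ι) :
    v ⬝ᵥ (l.map Q).prod *ᵥ w = 0 :=
  dotProduct_eq_zero_of_mem_krylov h <| krylov_le_krylov_card _ (prod_mulVec_mem_krylov le_rfl)

end Matrix

theorem stmt_9 (κ : ℕ) (Q : Fin (κ+1) → Matrix (Fin (κ+1)) (Fin (κ+1)) ℝ)
    (v w : Fin (κ+1) → ℝ)
    (h : ∀ l : List (Fin (κ+1)), l.length ≤ κ + 1 →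
      v ⬝ᵥ ((l.map Q).prod).mulVec w = 0) :
    ∀ l : List (Fin (κ+1)), v ⬝ᵥ ((l.map Q).prod).mulVec w = 0 :=
  dotProduct_prod_mulVec_eq_zero (by simpa only [Fintype.card_fin] using h)
end

section
/- Let D, U be (κ+1)×(κ+1) matrices with strictly positive entries such that for every j ≤ κ+1 and every cyclic sequence a_0,...,a_{j-1} in E_κ, ∏_{i=0}^{j-1} (DU)_{a_i, a_{(i+1) mod j}} = ∏_{i=0}^{j-1} (UD)_{a_i, a_{(i+1) mod j}}. Then the same identity holds for every n ≥ 1 and every cyclic sequence a_0,...,a_{n-1} in E_κ: ∏_{i=0}^{n-1} (DU)_{a_i, a_{(i+1) mod n}} = ∏_{i=0}^{n-1} (UD)_{a_i, a_{(i+1) mod n}}. -/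
/-!
Positivity makes `r b c = (D U)_{bc} / (U D)_{bc}` an element of the group of units, and the claim
says that the product of `r` around every cycle is `1`. The hypothesis for cycles of length one, two
and three (the simple cycles through a fixed vertex `z`) forces `r b c = r b z / r c z`, so `r` is a
coboundary and its product around any cycle telescopes to `1`.
-/

open Function

section CommGroup

variable {ι G : Type*} [CommGroup G]

theorem Fin.prod_div_add_one_eq_one {n : ℕ} (f : Fin (n+1) → G) :
    ∏ i, f i / f (i + 1) = 1 := by
  rw [Finset.prod_div_distrib, div_eq_one]
  exact (Fintype.prod_equiv (Equiv.addRight 1) _ _ fun _ => rfl).symm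

theorem eq_div_of_prod_simple_cycle_eq_one {r : ι → ι → G}
    (hr : ∀ j (a : Fin (j+1) → ι), Injective a → ∏ i, r (a i) (a (i+1)) = 1) (z b c : ι) :
    r b c = r b z / r c z := by
  have loop : ∀ b, r b b = 1 := fun b => by
    simpa using hr 0 ![b] (injective_of_subsingleton (α := Fin 1) _)
  have two_cycle : ∀ b c, b ≠ c → r b c * r c b = 1 := fun b c hbc => by
    simpa [Fin.prod_univ_succ] using
      hr 1 ![b, c] (Fin.cons_injective_iff.mpr ⟨by simpa using hbc, injective_of_subsingleton _⟩)
  have three_cycle : ∀ b c, b ≠ c → b ≠ z → c ≠ z → r b c * (r c z * r z b) = 1 :=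
    fun b c hbc hbz hcz => by
      simpa [Fin.prod_univ_succ] using hr 2 ![b, c, z] <| Fin.cons_injective_iff.mpr
        ⟨by simp [hbc, hbz], Fin.cons_injective_iff.mpr
          ⟨by simpa using hcz, injective_of_subsingleton _⟩⟩
  rcases eq_or_ne b c with rfl | hbc
  · rw [loop, div_self']
  rcases eq_or_ne c z with rfl | hcz
  · rw [loop, div_one]
  rw [eq_div_iff_mul_eq', ← mul_inv_eq_one]
  rcases eq_or_ne b z with rfl | hbz
  · rw [loop, inv_one, mul_one, two_cycle _ _ hbc]
  rw [mul_assoc, ← eq_inv_of_mul_eq_one_right (two_cycle _ _ hbz)]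
  exact three_cycle _ _ hbc hbz hcz

theorem prod_cycle_eq_one_of_prod_simple_cycle_eq_one {r : ι → ι → G}
    (hr : ∀ j (a : Fin (j+1) → ι), Injective a → ∏ i, r (a i) (a (i+1)) = 1)
    {n : ℕ} (a : Fin (n+1) → ι) : ∏ i, r (a i) (a (i+1)) = 1 := by
  rw [Finset.prod_congr rfl fun i _ => eq_div_of_prod_simple_cycle_eq_one hr (a 0) (a i) (a (i+1))]
  exact Fin.prod_div_add_one_eq_one fun i => r (a i) (a 0)

theorem prod_cycle_eq_of_prod_simple_cycle_eq {P Q : ι → ι → G}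
    (h : ∀ j (a : Fin (j+1) → ι), Injective a →
      ∏ i, P (a i) (a (i+1)) = ∏ i, Q (a i) (a (i+1)))
    {n : ℕ} (a : Fin (n+1) → ι) : ∏ i, P (a i) (a (i+1)) = ∏ i, Q (a i) (a (i+1)) := by
  refine (div_eq_one (G := G)).mp ?_
  rw [← Finset.prod_div_distrib]
  refine prod_cycle_eq_one_of_prod_simple_cycle_eq_one (r := fun b c => P b c / Q b c)
    (fun j a ha => ?_) a
  rw [Finset.prod_div_distrib, div_eq_one]
  exact h j a ha

end CommGroup

theorem Matrix.mul_apply_pos {n R : Type*} [Fintype n] [Nonempty n] [Semiring R] [PartialOrder R]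
    [IsStrictOrderedRing R] {A B : Matrix n n R} (hA : ∀ a b, 0 < A a b) (hB : ∀ a b, 0 < B a b)
    (a b : n) : 0 < (A * B) a b :=
  Finset.sum_pos (fun k _ => mul_pos (hA a k) (hB k b)) Finset.univ_nonempty

theorem stmt_11 (κ : ℕ) (D U : Matrix (Fin (κ+1)) (Fin (κ+1)) ℝ)
    (hD : ∀ a b, 0 < D a b) (hU : ∀ a b, 0 < U a b)
    (h : ∀ j : ℕ, j + 1 ≤ κ + 1 → ∀ a : Fin (j+1) → Fin (κ+1),
      ∏ i : Fin (j+1), (D * U) (a i) (a (i + 1))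
        = ∏ i : Fin (j+1), (U * D) (a i) (a (i + 1))) :
    ∀ n : ℕ, ∀ a : Fin (n+1) → Fin (κ+1),
      ∏ i : Fin (n+1), (D * U) (a i) (a (i + 1))
        = ∏ i : Fin (n+1), (U * D) (a i) (a (i + 1)) := by
  have hDU : ∀ a b, (D * U) a b ≠ 0 := fun a b => (Matrix.mul_apply_pos hD hU a b).ne'
  have hUD : ∀ a b, (U * D) a b ≠ 0 := fun a b => (Matrix.mul_apply_pos hU hD a b).ne'
  intro n a
  have := prod_cycle_eq_of_prod_simple_cycle_eq
    (P := fun b c => Units.mk0 _ (hDU b c)) (Q := fun b c => Units.mk0 _ (hUD b c)) ?_ a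
  · simpa [Units.ext_iff] using this
  intro j a ha
  simpa [Units.ext_iff] using h j (by simpa using Fintype.card_le_of_injective a ha) a
end

section
/- Let T be a positive-rate stochastic transition matrix on E_κ, let D, U be row-stochastic matrices with (DU)_{a,b} > 0 for all a,b satisfying T(a,b,c) = D_{a,c} U_{c,b} / (DU)_{a,b} for all a,b,c and DU = UD. Define T'(a,b,c) = U_{a,c} D_{c,b} / (UD)_{a,b}. Then T' is a stochastic transition matrix and (U, D, T') also satisfies T'(a,b,c) = U_{a,c} D_{c,b} / (UD)_{a,b} with UD = DU; moreover, for the Markov kernel M = DU = UD, the stationary distribution ρ of M (ρ M = ρ) satisfies, for all b_1,...,b_k, ∑_{a_1,...,a_{k+1}} ρ_{a_1} (∏_{i=1}^k M_{a_i,a_{i+1}} T(a_i,a_{i+1},b_i)) = ρ_{b_1} ∏_{i=1}^{k-1} M_{b_i,b_{i+1}} for k = 1 and k = 2. -/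
open Finset

lemma abs_sum_lt_sum_abs' {n : ℕ} (x : Fin n → ℝ) (i j : Fin n)
    (hi : 0 < x i) (hj : x j < 0) : |∑ a, x a| < ∑ a, |x a| := by
  have h1 : ∑ a, x a < ∑ a, |x a| := by
    apply Finset.sum_lt_sum (fun a _ => le_abs_self _)
    exact ⟨j, Finset.mem_univ j, by rw [abs_of_neg hj]; linarith⟩
  have h2 : -(∑ a, x a) < ∑ a, |x a| := by
    rw [← Finset.sum_neg_distrib]
    apply Finset.sum_lt_sum (fun a _ => neg_le_abs _)
    exact ⟨i, Finset.mem_univ i, by rw [abs_of_pos hi]; linarith⟩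
  exact abs_lt.mpr ⟨by linarith, h1⟩

lemma stationary_unique {n : ℕ} (M : Matrix (Fin (n+1)) (Fin (n+1)) ℝ)
    (hMpos : ∀ a b, 0 < M a b) (hMrow : ∀ a, ∑ b, M a b = 1)
    (f : Fin (n+1) → ℝ) (hsum : ∑ a, f a = 0)
    (hfix : ∀ b, ∑ a, f a * M a b = f b) : ∀ a, f a = 0 := by
  by_contra h
  push_neg at h
  obtain ⟨a₀, ha₀⟩ := h
  have hexneg : ∃ j, f j < 0 := by
    by_contra hn
    push_neg at hn
    have := (Finset.sum_eq_zero_iff_of_nonneg (fun a _ => hn a)).mp hsum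
    exact ha₀ (this a₀ (Finset.mem_univ a₀))
  have hexpos : ∃ i, 0 < f i := by
    by_contra hn
    push_neg at hn
    have := (Finset.sum_eq_zero_iff_of_nonpos (fun a _ => hn a)).mp hsum
    exact ha₀ (this a₀ (Finset.mem_univ a₀))
  obtain ⟨i, hi⟩ := hexpos
  obtain ⟨j, hj⟩ := hexneg
  have key : ∀ b, |f b| < ∑ a, |f a| * M a b := by
    intro b
    have := abs_sum_lt_sum_abs' (fun a => f a * M a b) i j
      (mul_pos hi (hMpos i b)) (mul_neg_of_neg_of_pos hj (hMpos j b))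
    change |∑ a, f a * M a b| < ∑ a, |f a * M a b| at this
    rw [hfix b] at this
    calc |f b| < ∑ a, |f a * M a b| := this
      _ = ∑ a, |f a| * M a b := by
          refine Finset.sum_congr rfl fun a _ => ?_
          rw [abs_mul, abs_of_pos (hMpos a b)]
  have hlt : ∑ b, |f b| < ∑ b, ∑ a, |f a| * M a b :=
    Finset.sum_lt_sum_of_nonempty Finset.univ_nonempty (fun b _ => key b)
  rw [Finset.sum_comm] at hlt
  have : ∑ a, ∑ b, |f a| * M a b = ∑ a, |f a| := by
    refine Finset.sum_congr rfl fun a _ => ?_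
    rw [← Finset.mul_sum, hMrow a, mul_one]
  rw [this] at hlt
  exact lt_irrefl _ hlt

theorem stmt_13 (κ : ℕ) (T T' : Fin (κ+1) → Fin (κ+1) → Fin (κ+1) → ℝ)
    (hpos : ∀ a b c, 0 < T a b c)
    (hstoch : ∀ a b, ∑ c, T a b c = 1)
    (D U : Matrix (Fin (κ+1)) (Fin (κ+1)) ℝ)
    (hD0 : ∀ a c, 0 ≤ D a c) (hD1 : ∀ a, ∑ c, D a c = 1)
    (hU0 : ∀ a c, 0 ≤ U a c) (hU1 : ∀ a, ∑ c, U a c = 1)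
    (hposDU : ∀ a b, 0 < (D * U) a b)
    (hT : ∀ a b c, T a b c = D a c * U c b / (D * U) a b)
    (hcomm : D * U = U * D)
    (hT' : ∀ a b c, T' a b c = U a c * D c b / (U * D) a b)
    (ρ : Fin (κ+1) → ℝ) (hρ0 : ∀ a, 0 ≤ ρ a) (hρ1 : ∑ a, ρ a = 1)
    (hstat : ∀ b, ∑ a, ρ a * (D * U) a b = ρ b) :
    (∀ a b c, 0 ≤ T' a b c) ∧ (∀ a b, ∑ c, T' a b c = 1) ∧
    (U * D = D * U) ∧
    (∀ b₁, ∑ a₁, ∑ a₂, ρ a₁ * ((D * U) a₁ a₂ * T a₁ a₂ b₁) = ρ b₁) ∧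
    (∀ b₁ b₂, ∑ a₁, ∑ a₂, ∑ a₃,
        ρ a₁ * ((D * U) a₁ a₂ * T a₁ a₂ b₁) * ((D * U) a₂ a₃ * T a₂ a₃ b₂)
      = ρ b₁ * (D * U) b₁ b₂) := by
  have hposUD : ∀ a b, 0 < (U * D) a b := by
    intro a b; rw [← hcomm]; exact hposDU a b
  -- M * T identity
  have hMT : ∀ a b c, (D * U) a b * T a b c = D a c * U c b := by
    intro a b c
    rw [hT a b c, mul_div_cancel₀ _ (ne_of_gt (hposDU a b))]
  -- rows of M sum to 1
  have hMrow : ∀ a, ∑ b, (D * U) a b = 1 := by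
    intro a
    simp only [Matrix.mul_apply]
    rw [Finset.sum_comm]
    calc ∑ c, ∑ b, D a c * U c b = ∑ c, D a c * ∑ b, U c b := by
          simp [Finset.mul_sum]
      _ = 1 := by simp [hU1, hD1]
  -- ρ D = ρ via uniqueness of the stationary distribution
  have hσρ : ∀ b, ∑ a, ρ a * D a b = ρ b := by
    set σ : Fin (κ+1) → ℝ := fun b => ∑ a, ρ a * D a b with hσ
    have hσstat : ∀ b, ∑ a, σ a * (D * U) a b = σ b := by
      intro b
      have hDM : D * (D * U) = (D * U) * D := by
        rw [hcomm, ← Matrix.mul_assoc, hcomm, Matrix.mul_assoc]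
      calc ∑ a, σ a * (D * U) a b
          = ∑ a, (∑ c, ρ c * D c a) * (D * U) a b := rfl
        _ = ∑ c, ρ c * ∑ a, D c a * (D * U) a b := by
            simp only [Finset.sum_mul, Finset.mul_sum]
            rw [Finset.sum_comm]
            exact Finset.sum_congr rfl fun c _ => Finset.sum_congr rfl
              fun a _ => mul_assoc _ _ _
        _ = ∑ c, ρ c * (D * (D * U)) c b := by
            simp [Matrix.mul_apply]
        _ = ∑ c, ρ c * ((D * U) * D) c b := by rw [hDM]
        _ = ∑ c, ρ c * ∑ a, (D * U) c a * D a b := by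
            simp [Matrix.mul_apply]
        _ = ∑ a, (∑ c, ρ c * (D * U) c a) * D a b := by
            simp only [Finset.sum_mul, Finset.mul_sum]
            rw [Finset.sum_comm]
            exact Finset.sum_congr rfl fun a _ => Finset.sum_congr rfl
              fun c _ => (mul_assoc _ _ _).symm
        _ = ∑ a, ρ a * D a b := by
            refine Finset.sum_congr rfl fun a _ => ?_
            rw [hstat a]
        _ = σ b := rfl
    have hσsum : ∑ b, σ b = 1 := by
      rw [hσ]
      rw [Finset.sum_comm]
      calc ∑ a, ∑ b, ρ a * D a b = ∑ a, ρ a * ∑ b, D a b := by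
            simp [Finset.mul_sum]
        _ = 1 := by simp [hD1, hρ1]
    have hfzero := stationary_unique (D * U) hposDU hMrow (fun a => σ a - ρ a)
      (by rw [Finset.sum_sub_distrib, hσsum, hρ1, sub_self])
      (by intro b
          simp only [sub_mul]
          rw [Finset.sum_sub_distrib, hσstat b, hstat b])
    intro b
    have := hfzero b
    simpa [sub_eq_zero] using this
  refine ⟨?_, ?_, hcomm.symm, ?_, ?_⟩
  · intro a b c
    rw [hT' a b c]
    exact div_nonneg (mul_nonneg (hU0 a c) (hD0 c b)) (le_of_lt (hposUD a b))
  · intro a b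
    calc ∑ c, T' a b c = ∑ c, U a c * D c b / (U * D) a b := by
          simp only [hT']
      _ = (∑ c, U a c * D c b) / (U * D) a b := by rw [Finset.sum_div]
      _ = (U * D) a b / (U * D) a b := by rw [← Matrix.mul_apply]
      _ = 1 := div_self (ne_of_gt (hposUD a b))
  · intro b₁
    calc ∑ a₁, ∑ a₂, ρ a₁ * ((D * U) a₁ a₂ * T a₁ a₂ b₁)
        = ∑ a₁, ∑ a₂, ρ a₁ * (D a₁ b₁ * U b₁ a₂) := by
          refine Finset.sum_congr rfl fun a₁ _ => Finset.sum_congr rfl fun a₂ _ => ?_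
          rw [hMT]
      _ = ∑ a₁, ρ a₁ * D a₁ b₁ * ∑ a₂, U b₁ a₂ := by
          simp [Finset.mul_sum, mul_assoc]
      _ = ∑ a₁, ρ a₁ * D a₁ b₁ := by simp [hU1]
      _ = ρ b₁ := hσρ b₁
  · intro b₁ b₂
    calc ∑ a₁, ∑ a₂, ∑ a₃,
          ρ a₁ * ((D * U) a₁ a₂ * T a₁ a₂ b₁) * ((D * U) a₂ a₃ * T a₂ a₃ b₂)
        = ∑ a₁, ∑ a₂, ∑ a₃,
            ρ a₁ * (D a₁ b₁ * U b₁ a₂) * (D a₂ b₂ * U b₂ a₃) := by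
          refine Finset.sum_congr rfl fun a₁ _ => Finset.sum_congr rfl
            fun a₂ _ => Finset.sum_congr rfl fun a₃ _ => ?_
          rw [hMT, hMT]
      _ = ∑ a₁, ∑ a₂, ρ a₁ * (D a₁ b₁ * U b₁ a₂) * D a₂ b₂ * ∑ a₃, U b₂ a₃ := by
          simp [Finset.mul_sum, mul_assoc]
      _ = ∑ a₁, ∑ a₂, ρ a₁ * D a₁ b₁ * (U b₁ a₂ * D a₂ b₂) := by
          simp only [hU1, mul_one]
          exact Finset.sum_congr rfl fun a₁ _ => Finset.sum_congr rfl
            fun a₂ _ => by ring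
      _ = ∑ a₁, ρ a₁ * D a₁ b₁ * ∑ a₂, U b₁ a₂ * D a₂ b₂ := by
          simp [Finset.mul_sum]
      _ = (∑ a₁, ρ a₁ * D a₁ b₁) * (U * D) b₁ b₂ := by
          rw [← Matrix.mul_apply, Finset.sum_mul]
      _ = ρ b₁ * (D * U) b₁ b₂ := by rw [hσρ b₁, hcomm]
end

section
/- Let κ = 1 and let T be a positive-rate stochastic transition matrix on {0,1} satisfying T(1,0,1)·T(0,1,0) = T(1,1,0)·T(0,0,1) and T(0,0,0) + T(1,1,0) ≠ T(0,1,0) + T(1,0,0). Set ρ_0 = (T(0,0,0)·T(1,1,0) − T(0,1,0)·T(1,0,0)) / (T(0,0,0) + T(1,1,0) − T(0,1,0) − T(1,0,0)) and ρ_1 = 1 − ρ_0. Then for all b ∈ {0,1}: ∑_{a_1,a_2 ∈ {0,1}} ρ_{a_1} ρ_{a_2} T(a_1,a_2,b) = ρ_b, i.e., the product (Bernoulli) measure with marginal ρ is invariant under the PCA with transition matrix T. -/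
/-!
Write `p a b = T a b 0` and `D = p 0 0 + p 1 1 - p 0 1 - p 1 0`. Together with stochasticity,
the hypothesis on `T` says `(1 - p 1 0) p 0 1 = p 1 1 (1 - p 0 0)`, which is exactly what makes
the invariance polynomial `x ↦ ∑ x_{a₁} x_{a₂} p a₁ a₂ - x` (with `x₀ = x`, `x₁ = 1 - x`) factor,
after multiplication by `D`, as `(D x - (p 1 1 - p 0 1)) (D x - (1 + p 1 1 - p 1 0))`.
The same relation turns the numerator of `ρ 0` into `p 1 1 - p 0 1`, so `ρ 0` is a root.
Invariance at `1` follows from invariance at `0` because the image measure has total mass one.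
-/

open Finset

theorem sum_sum_sum_mul_mul_eq_sq {α β R : Type*} [Fintype α] [Fintype β] [CommSemiring R]
    (ρ : α → R) (T : α → α → β → R) (hT : ∀ a₁ a₂, ∑ c, T a₁ a₂ c = 1) :
    ∑ c, ∑ a₁, ∑ a₂, ρ a₁ * ρ a₂ * T a₁ a₂ c = (∑ a, ρ a) ^ 2 := by
  simp_rw [Finset.sum_comm (s := univ (α := β)), ← Finset.mul_sum, hT, mul_one, sq,
    Finset.sum_mul_sum]

theorem invariance_polynomial_factor {p : Fin 2 → Fin 2 → ℝ}
    (hp : (1 - p 1 0) * p 0 1 = p 1 1 * (1 - p 0 0)) (x : ℝ) :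
    (p 0 0 + p 1 1 - p 0 1 - p 1 0) *
        (x * x * p 0 0 + x * (1 - x) * p 0 1 + (1 - x) * x * p 1 0
          + (1 - x) * (1 - x) * p 1 1 - x) =
      ((p 0 0 + p 1 1 - p 0 1 - p 1 0) * x - (p 1 1 - p 0 1)) *
        ((p 0 0 + p 1 1 - p 0 1 - p 1 0) * x - (1 + p 1 1 - p 1 0)) := by
  linear_combination hp

theorem sum_sum_mul_mul_eq_apply_zero {p : Fin 2 → Fin 2 → ℝ}
    (hp : (1 - p 1 0) * p 0 1 = p 1 1 * (1 - p 0 0))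
    (hD : p 0 0 + p 1 1 - p 0 1 - p 1 0 ≠ 0) {ρ : Fin 2 → ℝ}
    (hρ0 : ρ 0 = (p 0 0 * p 1 1 - p 0 1 * p 1 0) / (p 0 0 + p 1 1 - p 0 1 - p 1 0))
    (hρ1 : ρ 1 = 1 - ρ 0) :
    ∑ a₁, ∑ a₂, ρ a₁ * ρ a₂ * p a₁ a₂ = ρ 0 := by
  have hroot : (p 0 0 + p 1 1 - p 0 1 - p 1 0) * ρ 0 = p 1 1 - p 0 1 := by
    rw [hρ0, mul_div_cancel₀ _ hD]
    linear_combination hp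
  have hpoly := invariance_polynomial_factor hp (ρ 0)
  rw [hroot, sub_self, zero_mul, mul_eq_zero, or_iff_right hD, sub_eq_zero] at hpoly
  simp only [Fin.sum_univ_two, hρ1]
  linear_combination hpoly

theorem stmt_14_general (T : Fin 2 → Fin 2 → Fin 2 → ℝ)
    (hstoch : ∀ a b, T a b 0 + T a b 1 = 1)
    (hcond : T 1 0 1 * T 0 1 0 = T 1 1 0 * T 0 0 1)
    (hne : T 0 0 0 + T 1 1 0 ≠ T 0 1 0 + T 1 0 0)
    (ρ : Fin 2 → ℝ)
    (hρ0 : ρ 0 = (T 0 0 0 * T 1 1 0 - T 0 1 0 * T 1 0 0)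
      / (T 0 0 0 + T 1 1 0 - T 0 1 0 - T 1 0 0))
    (hρ1 : ρ 1 = 1 - ρ 0) :
    ∀ b, ∑ a₁, ∑ a₂, ρ a₁ * ρ a₂ * T a₁ a₂ b = ρ b := by
  have hp : (1 - T 1 0 0) * T 0 1 0 = T 1 1 0 * (1 - T 0 0 0) := by
    linear_combination hcond - T 0 1 0 * hstoch 1 0 + T 1 1 0 * hstoch 0 0
  have hD : T 0 0 0 + T 1 1 0 - T 0 1 0 - T 1 0 0 ≠ 0 := by
    contrapose! hne
    linarith
  have h0 := sum_sum_mul_mul_eq_apply_zero (p := fun a₁ a₂ ↦ T a₁ a₂ 0) hp hD hρ0 hρ1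
  have hmass := sum_sum_sum_mul_mul_eq_sq ρ T (by simpa only [Fin.sum_univ_two] using hstoch)
  have htotal : ∑ a, ρ a = 1 := by rw [Fin.sum_univ_two, hρ1, add_sub_cancel]
  rw [Fin.sum_univ_two, h0, htotal, one_pow] at hmass
  intro b
  fin_cases b
  · exact h0
  · simp only [Fin.mk_one, hρ1]
    linarith

theorem stmt_14 (T : Fin 2 → Fin 2 → Fin 2 → ℝ)
    (hpos : ∀ a b c, 0 < T a b c)
    (hstoch : ∀ a b, T a b 0 + T a b 1 = 1)
    (hcond : T 1 0 1 * T 0 1 0 = T 1 1 0 * T 0 0 1)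
    (hne : T 0 0 0 + T 1 1 0 ≠ T 0 1 0 + T 1 0 0)
    (ρ : Fin 2 → ℝ)
    (hρ0 : ρ 0 = (T 0 0 0 * T 1 1 0 - T 0 1 0 * T 1 0 0)
      / (T 0 0 0 + T 1 1 0 - T 0 1 0 - T 1 0 0))
    (hρ1 : ρ 1 = 1 - ρ 0) :
    ∀ b, ∑ a₁, ∑ a₂, ρ a₁ * ρ a₂ * T a₁ a₂ b = ρ b :=
  stmt_14_general T hstoch hcond hne ρ hρ0 hρ1
end

section
/- Let T be a stochastic transition matrix on E_κ satisfying T(a,b,0) > 0 and T(0,0,c) > 0 for all a,b,c, together with the condition T(a,b,c) = T(0,0,0)·T(a,b,0)·T(a,0,c)·T(0,b,c)/(T(a,0,0)·T(0,b,0)·T(0,0,c)) whenever defined. Then for any a,b,c: if T(a,b,c) = 0, then either T(a,b',c) = 0 for all b' ∈ E_κ, or T(a',b,c) = 0 for all a' ∈ E_κ. -/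
section ProductForm

variable {ι K : Type*} [Zero ι] [Field K] (T : ι → ι → ι → K)

theorem eq_zero_iff_marginal_eq_zero (hrow : ∀ a b, T a b 0 ≠ 0) (hcol : ∀ c, T 0 0 c ≠ 0)
    (hcond : ∀ a b c, T a b c =
      T 0 0 0 * T a b 0 * T a 0 c * T 0 b c / (T a 0 0 * T 0 b 0 * T 0 0 c))
    (a b c : ι) : T a b c = 0 ↔ T a 0 c = 0 ∨ T 0 b c = 0 := by
  rw [hcond a b c]
  simp only [div_eq_zero_iff, mul_eq_zero, hrow, hcol, false_or, or_false]

end ProductForm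

theorem stmt_18_general (κ : ℕ) (T : Fin (κ+1) → Fin (κ+1) → Fin (κ+1) → ℝ)
    (hpos1 : ∀ a b, 0 < T a b 0) (hpos2 : ∀ c, 0 < T 0 0 c)
    (hcond : ∀ a b c, T a b c =
      T 0 0 0 * T a b 0 * T a 0 c * T 0 b c / (T a 0 0 * T 0 b 0 * T 0 0 c)) :
    ∀ a b c, T a b c = 0 →
      (∀ b' : Fin (κ+1), T a b' c = 0) ∨ (∀ a' : Fin (κ+1), T a' b c = 0) := by
  have hzero := eq_zero_iff_marginal_eq_zero T (fun a b => (hpos1 a b).ne') (fun c => (hpos2 c).ne')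
    hcond
  intro a b c h
  rcases (hzero a b c).1 h with h0 | h0
  · exact Or.inl fun b' => (hzero a b' c).2 (Or.inl h0)
  · exact Or.inr fun a' => (hzero a' b c).2 (Or.inr h0)

theorem stmt_18 (κ : ℕ) (T : Fin (κ+1) → Fin (κ+1) → Fin (κ+1) → ℝ)
    (hT0 : ∀ a b c, 0 ≤ T a b c) (hT1 : ∀ a b, ∑ c, T a b c = 1)
    (hpos1 : ∀ a b, 0 < T a b 0) (hpos2 : ∀ c, 0 < T 0 0 c)
    (hcond : ∀ a b c, T a b c =
      T 0 0 0 * T a b 0 * T a 0 c * T 0 b c / (T a 0 0 * T 0 b 0 * T 0 0 c)) :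
    ∀ a b c, T a b c = 0 →
      (∀ b' : Fin (κ+1), T a b' c = 0) ∨ (∀ a' : Fin (κ+1), T a' b c = 0) :=
  stmt_18_general κ T hpos1 hpos2 hcond
end
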